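/- If T is an ordinary tree on n vertices that is not a path, then the path P_n can be obtained from T by finitely many total grafting operations. -/

import Mathlib

/-- `Graft G G'` : `G'` is obtained from `G` by one total grafting operation:
two pendant paths `a 0 = v, a 1, …, a p` and `b 0 = v, b 1, …, b q`
(`p, q ≥ 1`) attached at `v` and meeting only at `v` (internal vertices of
degree 2, endpoints of degree 1) are replaced by a single pendant path of
length `p + q` at `v`, by deleting the edge `v b₁` and adding the edge
`(a p) b₁`. -/
def Graft {n : ℕ} (G G' : SimpleGraph (Fin n)) : Prop :=
  ∃ (p q : ℕ) (hp : 1 ≤ p) (hq : 1 ≤ q)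
    (a : Fin (p + 1) → Fin n) (b : Fin (q + 1) → Fin n),
    Function.Injective a ∧ Function.Injective b ∧ a 0 = b 0 ∧
    (∀ i j, a i = b j → (i : ℕ) = 0 ∧ (j : ℕ) = 0) ∧
    (∀ i : Fin p, G.Adj (a i.castSucc) (a i.succ)) ∧
    (∀ i : Fin q, G.Adj (b i.castSucc) (b i.succ)) ∧
    (∀ i : Fin (p + 1), 0 < (i : ℕ) → (i : ℕ) < p → (G.neighborSet (a i)).ncard = 2) ∧
    (∀ i : Fin (q + 1), 0 < (i : ℕ) → (i : ℕ) < q → (G.neighborSet (b i)).ncard = 2) ∧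
    (G.neighborSet (a (Fin.last p))).ncard = 1 ∧
    (G.neighborSet (b (Fin.last q))).ncard = 1 ∧
    G' = SimpleGraph.fromEdgeSet
      ((G.edgeSet \ {s(a 0, b ⟨1, by omega⟩)}) ∪ {s(a (Fin.last p), b ⟨1, by omega⟩)})


section GraftAux

open SimpleGraph

variable {n : ℕ} {T : SimpleGraph (Fin n)}


lemma dist_getVert_le (hc : T.Connected) (r : Fin n) {u x : Fin n} (w : T.Walk u x) :
    ∀ k, T.dist r (w.getVert k) ≤ T.dist r u + k := by
  induction w with
  | nil => intro k; rw [SimpleGraph.Walk.getVert_of_length_le _ (by simp)]; omega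
  | @cons u u' x h w ih =>
    intro k
    cases k with
    | zero => simp
    | succ k =>
      rw [SimpleGraph.Walk.getVert_cons_succ]
      calc T.dist r (w.getVert k) ≤ T.dist r u' + k := ih k
        _ ≤ (T.dist r u + 1) + k := by
            have h1 : T.dist u u' = 1 := by rwa [SimpleGraph.dist_eq_one_iff_adj]
            have := hc.dist_triangle (u := r) (v := u) (w := u')
            omega
        _ = T.dist r u + (k+1) := by omega

lemma dist_getVert_le' (hc : T.Connected) (r : Fin n) {x : Fin n} (w : T.Walk r x) (k : ℕ) :
    T.dist r (w.getVert k) ≤ k := by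
  have := dist_getVert_le hc r w k
  rwa [SimpleGraph.dist_self, Nat.zero_add] at this

lemma isPath_concat {u v x : Fin n} {p : T.Walk u v} (hp : p.IsPath) (h : T.Adj v x)
    (hx : x ∉ p.support) : (p.concat h).IsPath := by
  rw [← SimpleGraph.Walk.isPath_reverse_iff, SimpleGraph.Walk.reverse_concat]
  rw [SimpleGraph.Walk.cons_isPath_iff]
  refine ⟨by simpa using hp, by simpa using hx⟩

/-- In a tree, the distances to `r` of two adjacent vertices differ by exactly one. -/
lemma tree_adj_dist (hT : T.IsTree) (r : Fin n) {x y : Fin n} (h : T.Adj x y) :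
    T.dist r y = T.dist r x + 1 ∨ T.dist r x = T.dist r y + 1 := by
  have hc := hT.isConnected
  have h1 : T.dist r y ≤ T.dist r x + 1 := by
    have := hc.dist_triangle (u := r) (v := x) (w := y)
    rw [SimpleGraph.dist_eq_one_iff_adj.2 h] at this; omega
  have h2 : T.dist r x ≤ T.dist r y + 1 := by
    have := hc.dist_triangle (u := r) (v := y) (w := x)
    rw [SimpleGraph.dist_eq_one_iff_adj.2 h.symm] at this; omega
  have hne : T.dist r x ≠ T.dist r y := by
    intro heq
    obtain ⟨P, hP, hPl⟩ := hc.exists_path_of_dist r x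
    obtain ⟨Q, hQ, hQl⟩ := hc.exists_path_of_dist r y
    have hy_not : y ∉ P.support := by
      intro hy
      obtain ⟨k, hkv, hk⟩ := SimpleGraph.Walk.mem_support_iff_exists_getVert.1 hy
      have hdy : T.dist r y ≤ k := by
        rw [← hkv]; exact dist_getVert_le' hc r P k
      have hkl : k = P.length := by omega
      rw [hkl, P.getVert_length] at hkv
      exact h.ne hkv
    have hW : (P.concat h).IsPath := isPath_concat hP h hy_not
    have heqW := (hT.existsUnique_path r y).unique hW hQ
    have hlen := congrArg SimpleGraph.Walk.length heqW
    rw [SimpleGraph.Walk.length_concat, hPl, hQl, heq] at hlen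
    omega
  omega

/-- Unique parent: in a tree, a vertex has at most one neighbor closer to the root. -/
lemma tree_parent_unique (hT : T.IsTree) (r : Fin n) {x w₁ w₂ : Fin n}
    (h₁ : T.Adj x w₁) (h₂ : T.Adj x w₂)
    (hd₁ : T.dist r w₁ + 1 = T.dist r x) (hd₂ : T.dist r w₂ + 1 = T.dist r x) :
    w₁ = w₂ := by
  have hc := hT.isConnected
  have key : ∀ w : Fin n, T.Adj x w → T.dist r w + 1 = T.dist r x →
      ∃ (W : T.Walk r x), W.IsPath ∧ W.length = T.dist r x ∧
        W.getVert (T.dist r x - 1) = w := by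
    intro w hw hd
    obtain ⟨P, hP, hPl⟩ := hc.exists_path_of_dist r w
    have hx_not : x ∉ P.support := by
      intro hx
      obtain ⟨k, hkv, hk⟩ := SimpleGraph.Walk.mem_support_iff_exists_getVert.1 hx
      have : T.dist r x ≤ k := by rw [← hkv]; exact dist_getVert_le' hc r P k
      omega
    refine ⟨P.concat hw.symm, isPath_concat hP hw.symm hx_not, ?_, ?_⟩
    · rw [SimpleGraph.Walk.length_concat]; omega
    · rw [SimpleGraph.Walk.concat_eq_append, SimpleGraph.Walk.getVert_append]
      have hnlt : ¬ (T.dist r x - 1 < P.length) := by omega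
      rw [if_neg hnlt]
      have h0 : T.dist r x - 1 - P.length = 0 := by omega
      rw [h0]
      simp
  obtain ⟨W₁, hW₁, hl₁, hv₁⟩ := key w₁ h₁ hd₁
  obtain ⟨W₂, hW₂, hl₂, hv₂⟩ := key w₂ h₂ hd₂
  have heqW := (hT.existsUnique_path r x).unique hW₁ hW₂
  rw [heqW, hv₂] at hv₁
  exact hv₁.symm

/-- Parent existence. -/
lemma tree_parent_exists (hc : T.Connected) (r : Fin n) {x : Fin n} (hx : x ≠ r) :
    ∃ w, T.Adj x w ∧ T.dist r w + 1 = T.dist r x := by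
  have hd : T.dist r x ≠ 0 := by
    intro h0
    exact hx ((hc.dist_eq_zero_iff).1 h0).symm
  obtain ⟨P, hPl⟩ := hc.exists_walk_length_eq_dist r x
  have h1 : T.dist r x - 1 < P.length := by omega
  have hadj : T.Adj (P.getVert (T.dist r x - 1)) (P.getVert (T.dist r x - 1 + 1)) :=
    P.adj_getVert_succ h1
  have hgd : P.getVert (T.dist r x - 1 + 1) = x := by
    have he : T.dist r x - 1 + 1 = P.length := by omega
    rw [he, P.getVert_length]
  rw [hgd] at hadj
  refine ⟨P.getVert (T.dist r x - 1), hadj.symm, ?_⟩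
  have hle : T.dist r (P.getVert (T.dist r x - 1)) ≤ T.dist r x - 1 :=
    dist_getVert_le' hc r P _
  have hge : T.dist r x ≤ T.dist r (P.getVert (T.dist r x - 1)) + 1 := by
    have htr := hc.dist_triangle (u := r) (v := P.getVert (T.dist r x - 1)) (w := x)
    have hone : T.dist (P.getVert (T.dist r x - 1)) x = 1 :=
      SimpleGraph.dist_eq_one_iff_adj.2 hadj
    omega
  omega

lemma ncard_one_mem {S : Set (Fin n)} (h : S.ncard = 1) {x y : Fin n}
    (hx : x ∈ S) (hy : y ∈ S) : x = y := by
  obtain ⟨z, hz⟩ := Set.ncard_eq_one.1 h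
  rw [hz] at hx hy
  rw [Set.mem_singleton_iff.1 hx, Set.mem_singleton_iff.1 hy]

lemma ncard_two_mem {S : Set (Fin n)} (h : S.ncard = 2) {x y z : Fin n}
    (hx : x ∈ S) (hy : y ∈ S) (hxy : x ≠ y) (hz : z ∈ S) : z = x ∨ z = y := by
  obtain ⟨a, b, hab, hS⟩ := Set.ncard_eq_two.1 h
  rw [hS] at hx hy hz
  rcases hz with hz | hz <;> rcases hx with hx | hx <;> rcases hy with hy | hy <;>
    simp_all <;> tauto

lemma mem_of_closed {G : SimpleGraph (Fin n)} {S : Set (Fin n)}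
    (hS : ∀ x y, x ∈ S → G.Adj x y → y ∈ S) {u v : Fin n} (w : G.Walk u v)
    (hu : u ∈ S) : v ∈ S := by
  induction w with
  | nil => exact hu
  | @cons a b c h w ih => exact ih (hS a b hu h)

/-- Descent along a pendant path: from a vertex `u ≠ r` all of whose "at least as deep"
vertices have degree ≤ 2, there is a path descending to a leaf. -/
lemma desc (hT : T.IsTree) (r : Fin n) :
    ∀ (m : ℕ) (u : Fin n), n - T.dist r u ≤ m → u ≠ r →
    (∀ w, T.dist r u ≤ T.dist r w → (T.neighborSet w).ncard ≤ 2) →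
    ∃ (p : ℕ) (a : ℕ → Fin n), a 0 = u ∧
      (∀ i ≤ p, T.dist r (a i) = T.dist r u + i) ∧
      (∀ i < p, T.Adj (a i) (a (i+1))) ∧
      (∀ i < p, (T.neighborSet (a i)).ncard = 2) ∧
      (T.neighborSet (a p)).ncard = 1 := by
  intro m
  induction m with
  | zero =>
    intro u hm hu hdeg
    exfalso
    -- dist r u < n always
    obtain ⟨P, hP, hPl⟩ := hT.isConnected.exists_path_of_dist r u
    have := hP.length_lt
    simp only [Fintype.card_fin] at this
    omega
  | succ m ih =>
    intro u hm hu hdeg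
    obtain ⟨w, hw, hwd⟩ := tree_parent_exists hT.isConnected r hu
    have hpos : 1 ≤ (T.neighborSet u).ncard := by
      rw [Nat.one_le_iff_ne_zero]
      intro h0
      have : (T.neighborSet u) = ∅ := by
        rwa [Set.ncard_eq_zero (Set.toFinite _)] at h0
      exact (Set.eq_empty_iff_forall_notMem.1 this w) hw
    have hle2 : (T.neighborSet u).ncard ≤ 2 := hdeg u le_rfl
    rcases Nat.lt_or_ge (T.neighborSet u).ncard 2 with hlt | hge
    · -- degree 1 : u is a leaf
      refine ⟨0, fun _ => u, rfl, ?_, ?_, ?_, ?_⟩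
      · intro i hi
        interval_cases i
        simp
      · exact fun i hi => absurd hi (by omega)
      · exact fun i hi => absurd hi (by omega)
      · have h1 : (T.neighborSet u).ncard = 1 := by omega
        simpa using h1
    · -- degree 2 : continue descending
      have h2 : (T.neighborSet u).ncard = 2 := le_antisymm hle2 hge
      obtain ⟨x, y, hxy, hS⟩ := Set.ncard_eq_two.1 h2
      have hwmem : w ∈ T.neighborSet u := hw
      -- the other neighbor
      have hother : ∃ u', T.Adj u u' ∧ u' ≠ w := by
        rw [hS] at hwmem
        rcases hwmem with h | h
        · refine ⟨y, ?_, by rw [← h] at hxy; exact fun hc => hxy hc.symm⟩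
          have : y ∈ T.neighborSet u := by rw [hS]; right; rfl
          exact this
        · refine ⟨x, ?_, by rw [← h] at hxy; exact hxy⟩
          have : x ∈ T.neighborSet u := by rw [hS]; left; rfl
          exact this
      obtain ⟨u', hu', hu'w⟩ := hother
      have hd' : T.dist r u' = T.dist r u + 1 := by
        rcases tree_adj_dist hT r hu' with h | h
        · exact h
        · exfalso
          exact hu'w (tree_parent_unique hT r hu' hw (by omega) hwd)
      have hu'r : u' ≠ r := by
        intro h; rw [h] at hd'
        rw [SimpleGraph.dist_self] at hd'; omega
      have hmm : n - T.dist r u' ≤ m := by rw [hd']; omega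
      have hrec := ih u' hmm hu'r (fun z hz => hdeg z (by omega))
      obtain ⟨p, a, ha0, had, haadj, hai, hal⟩ := hrec
      refine ⟨p + 1, fun i => if i = 0 then u else a (i - 1), by simp, ?_, ?_, ?_, ?_⟩
      · intro i hi
        rcases Nat.eq_zero_or_pos i with h0 | h0
        · simp [h0]
        · have : ¬ (i = 0) := by omega
          simp only [this, if_false]
          rw [had (i-1) (by omega), hd']
          omega
      · intro i hi
        rcases Nat.eq_zero_or_pos i with h0 | h0
        · subst h0
          simpa [ha0] using hu'
        · have e1 : ¬ (i = 0) := by omega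
          have e2 : ¬ (i + 1 = 0) := by omega
          simp only [e1, e2, if_false]
          have : i - 1 + 1 = i + 1 - 1 := by omega
          have := haadj (i-1) (by omega)
          rwa [show i - 1 + 1 = i + 1 - 1 by omega] at this
      · intro i hi
        rcases Nat.eq_zero_or_pos i with h0 | h0
        · simp [h0, h2]
        · have e1 : ¬ (i = 0) := by omega
          simp only [e1, if_false]
          exact hai (i-1) (by omega)
      · have e1 : ¬ (p + 1 = 0) := by omega
        simp only [e1, if_false]
        simpa using hal

lemma path_iso (hT : T.IsTree) (hnb : ∀ v, (T.neighborSet v).ncard ≤ 2) :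
    Nonempty (T ≃g SimpleGraph.pathGraph n) := by
  have hc := hT.isConnected
  have hne : Nonempty (Fin n) := hc.nonempty
  have hn1 : 1 ≤ n := by rcases hne with ⟨x⟩; exact x.pos
  by_cases hone : n = 1
  · subst hone
    refine ⟨⟨Equiv.refl _, ?_⟩⟩
    intro a b
    have hab : a = b := Subsingleton.elim a b
    subst hab
    simp only [Equiv.refl_apply]
    constructor
    · intro h
      rw [SimpleGraph.pathGraph_adj] at h
      omega
    · intro h
      exact absurd h (T.loopless.irrefl a)
  have hn2 : 2 ≤ n := by omega
  -- pick a leaf r at maximal distance from x0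
  set x0 : Fin n := ⟨0, by omega⟩ with hx0
  obtain ⟨r, -, hmax⟩ := Finset.exists_max_image Finset.univ (T.dist x0) ⟨x0, Finset.mem_univ _⟩
  have hmax' : ∀ w, T.dist x0 w ≤ T.dist x0 r := fun w => hmax w (Finset.mem_univ _)
  have hrx0 : r ≠ x0 := by
    intro h
    have h1 : T.dist x0 (⟨1, by omega⟩ : Fin n) > 0 :=
      hc.pos_dist_of_ne (by simp [hx0, Fin.ext_iff])
    have := hmax' ⟨1, by omega⟩
    rw [h, SimpleGraph.dist_self] at this
    omega
  obtain ⟨c, hcadj, hcd⟩ := tree_parent_exists hc x0 hrx0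
  have hrleaf : T.neighborSet r = {c} := by
    apply Set.eq_singleton_iff_unique_mem.2
    refine ⟨hcadj, ?_⟩
    intro w hw
    rcases tree_adj_dist hT x0 (hw : T.Adj r w) with h | h
    · exact absurd (hmax' w) (by omega)
    · exact tree_parent_unique hT x0 hw hcadj (by omega) hcd
  have hcr : c ≠ r := hcadj.ne'
  have hdrc : T.dist r c = 1 := by
    rcases tree_adj_dist hT r hcadj with h | h
    · rw [SimpleGraph.dist_self] at h; exact h
    · rw [SimpleGraph.dist_self] at h; omega
  obtain ⟨p, a, ha0, had, haadj, hai, hal⟩ :=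
    desc hT r n c (by omega) hcr (fun w _ => hnb w)
  set s : ℕ → Fin n := fun i => if i = 0 then r else a (i-1) with hs
  have hsd : ∀ i ≤ p + 1, T.dist r (s i) = i := by
    intro i hi
    rcases Nat.eq_zero_or_pos i with h0 | h0
    · simp [hs, h0, SimpleGraph.dist_self]
    · have e1 : ¬ (i = 0) := by omega
      simp only [hs, e1, if_false]
      rw [had (i-1) (by omega), hdrc]
      omega
  have hsinj : ∀ i ≤ p+1, ∀ j ≤ p+1, s i = s j → i = j := by
    intro i hi j hj hij
    have := hsd i hi
    rw [hij, hsd j hj] at this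
    omega
  have hsadj : ∀ i < p + 1, T.Adj (s i) (s (i+1)) := by
    intro i hi
    rcases Nat.eq_zero_or_pos i with h0 | h0
    · subst h0
      simpa [hs, ha0] using hcadj
    · have e1 : ¬ (i = 0) := by omega
      simp only [hs, e1, if_false]
      have := haadj (i-1) (by omega)
      rwa [show i - 1 + 1 = i + 1 - 1 by omega] at this
  have hmid : ∀ i, 1 ≤ i → i ≤ p → (T.neighborSet (s i)).ncard = 2 := by
    intro i h1 h2
    have e1 : ¬ (i = 0) := by omega
    simp only [hs, e1, if_false]
    exact hai (i-1) (by omega)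
  have hlast : (T.neighborSet (s (p+1))).ncard = 1 := by
    simp only [hs, Nat.succ_ne_zero, if_false]
    simpa using hal
  have hfirst : T.neighborSet (s 0) = {s 1} := by
    simp only [hs, if_pos rfl]
    rw [hrleaf]
    congr 1
    simp [ha0]
  -- the image set is closed under adjacency
  set S : Set (Fin n) := {x | ∃ i ≤ p + 1, s i = x} with hS
  have hclosed : ∀ x y, x ∈ S → T.Adj x y → y ∈ S := by
    rintro x y ⟨i, hi, rfl⟩ hxy
    rcases Nat.eq_zero_or_pos i with h0 | h0
    · subst h0
      have : y ∈ T.neighborSet (s 0) := hxy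
      rw [hfirst] at this
      exact ⟨1, by omega, (Set.mem_singleton_iff.1 this).symm⟩
    rcases Nat.lt_or_ge i (p+1) with hip | hip
    · -- 1 ≤ i ≤ p : two neighbors
      have h2 : (T.neighborSet (s i)).ncard = 2 := hmid i h0 (by omega)
      have hm1 : s (i-1) ∈ T.neighborSet (s i) := by
        have := hsadj (i-1) (by omega)
        rw [show i - 1 + 1 = i by omega] at this
        exact this.symm
      have hp1 : s (i+1) ∈ T.neighborSet (s i) := hsadj i (by omega)
      have hne' : s (i-1) ≠ s (i+1) := by
        intro h
        have := hsinj (i-1) (by omega) (i+1) (by omega) h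
        omega
      rcases ncard_two_mem h2 hm1 hp1 hne' (hxy : y ∈ T.neighborSet (s i)) with h | h
      · exact ⟨i-1, by omega, h.symm⟩
      · exact ⟨i+1, by omega, h.symm⟩
    · -- i = p + 1 : leaf
      have hieq : i = p + 1 := by omega
      subst hieq
      have hm1 : s p ∈ T.neighborSet (s (p+1)) := (hsadj p (by omega)).symm
      have := ncard_one_mem hlast (hxy : y ∈ T.neighborSet (s (p+1))) hm1
      exact ⟨p, by omega, this.symm⟩
  have huniv : ∀ x, x ∈ S := by
    intro x
    have hreach : T.Reachable r x := hc.preconnected r x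
    obtain ⟨w⟩ := hreach
    exact mem_of_closed hclosed w ⟨0, by omega, by simp [hs]⟩
  -- cardinality : p + 2 = n
  have hcard : p + 2 = n := by
    have hinj : Function.Injective (fun i : Fin (p+2) => s i.val) := by
      intro i j hij
      have := hsinj i.val (by omega) j.val (by omega) hij
      exact Fin.ext this
    have hsurj : Function.Surjective (fun i : Fin (p+2) => s i.val) := by
      intro x
      obtain ⟨i, hi, hix⟩ := huniv x
      exact ⟨⟨i, by omega⟩, hix⟩
    have h1 := Fintype.card_le_of_injective _ hinj
    have h2 := Fintype.card_le_of_surjective _ hsurj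
    simp only [Fintype.card_fin] at h1 h2
    omega
  -- build the isomorphism pathGraph n ≃g T
  have hsinj' : ∀ i ≤ p+1, ∀ j ≤ p+1, s i = s j → i = j := hsinj
  have hbij : Function.Bijective (fun i : Fin n => s i.val) := by
    refine ⟨?_, ?_⟩
    · intro i j hij
      exact Fin.ext (hsinj i.val (by omega) j.val (by omega) hij)
    · intro x
      obtain ⟨i, hi, hix⟩ := huniv x
      exact ⟨⟨i, by omega⟩, hix⟩
  refine ⟨RelIso.symm ⟨Equiv.ofBijective _ hbij, ?_⟩⟩
  intro i j
  simp only [Equiv.ofBijective_apply]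
  rw [SimpleGraph.pathGraph_adj]
  constructor
  · intro hadj
    rcases Nat.eq_zero_or_pos i.val with h0 | h0
    · rw [h0] at hadj
      have : (s j.val) ∈ T.neighborSet (s 0) := hadj
      rw [hfirst] at this
      have := hsinj j.val (by omega) 1 (by omega) (Set.mem_singleton_iff.1 this)
      left; omega
    rcases Nat.lt_or_ge i.val (p+1) with hip | hip
    · have h2 : (T.neighborSet (s i.val)).ncard = 2 := hmid i.val h0 (by omega)
      have hm1 : s (i.val-1) ∈ T.neighborSet (s i.val) := by
        have := hsadj (i.val-1) (by omega)
        rw [show i.val - 1 + 1 = i.val by omega] at this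
        exact this.symm
      have hp1 : s (i.val+1) ∈ T.neighborSet (s i.val) := hsadj i.val (by omega)
      have hne' : s (i.val-1) ≠ s (i.val+1) := by
        intro h
        have := hsinj (i.val-1) (by omega) (i.val+1) (by omega) h
        omega
      rcases ncard_two_mem h2 hm1 hp1 hne' (hadj : s j.val ∈ T.neighborSet (s i.val)) with h | h
      · have := hsinj j.val (by omega) (i.val - 1) (by omega) h
        right; omega
      · have := hsinj j.val (by omega) (i.val + 1) (by omega) h
        left; omega
    · have hieq : i.val = p + 1 := by omega
      have hm1 : s p ∈ T.neighborSet (s (p+1)) := (hsadj p (by omega)).symm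
      have hmem : s j.val ∈ T.neighborSet (s (p+1)) := by
        have : T.Adj (s (p+1)) (s j.val) := by rw [← hieq]; exact hadj
        exact this
      have := hsinj j.val (by omega) p (by omega) (ncard_one_mem hlast hmem hm1)
      right; omega
  · intro h
    rcases h with h | h
    · have := hsadj i.val (by omega)
      rwa [show i.val + 1 = j.val from h] at this
    · have := hsadj j.val (by omega)
      rw [show j.val + 1 = i.val from h] at this
      exact this.symm

set_option maxHeartbeats 1000000 in
lemma graft_step (hT : T.IsTree) (hb : ∃ v, 3 ≤ (T.neighborSet v).ncard) :
    ∃ G' : SimpleGraph (Fin n), Graft T G' ∧ G'.IsTree ∧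
      {x | (G'.neighborSet x).ncard = 1}.ncard < {x | (T.neighborSet x).ncard = 1}.ncard := by
  classical
  have hc := hT.isConnected
  obtain ⟨v₀, hv₀⟩ := hb
  set r := v₀ with hr
  -- pick a branch vertex farthest from r
  set Bset : Finset (Fin n) := Finset.univ.filter (fun w => 3 ≤ (T.neighborSet w).ncard) with hBset
  have hBne : Bset.Nonempty := ⟨v₀, by simp [hBset]; exact hv₀⟩
  obtain ⟨v, hvB, hvmax⟩ := Finset.exists_max_image Bset (T.dist r) hBne
  have hv3 : 3 ≤ (T.neighborSet v).ncard := by simpa [hBset] using hvB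
  have hdeep : ∀ w, T.dist r v < T.dist r w → (T.neighborSet w).ncard ≤ 2 := by
    intro w hw
    by_contra hcon
    push_neg at hcon
    have : w ∈ Bset := by simp [hBset]; omega
    exact absurd (hvmax w this) (by omega)
  -- find two children of v
  have hchildren : ∃ c c', c ≠ c' ∧ T.Adj v c ∧ T.Adj v c' ∧
      T.dist r c = T.dist r v + 1 ∧ T.dist r c' = T.dist r v + 1 := by
    obtain ⟨t, hts, ht3⟩ := Set.exists_subset_card_eq (show 3 ≤ (T.neighborSet v).ncard from hv3)
    obtain ⟨x, y, z, hxy, hxz, hyz, hteq⟩ := Set.ncard_eq_three.1 ht3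
    have hx : T.Adj v x := hts (by rw [hteq]; left; rfl)
    have hy : T.Adj v y := hts (by rw [hteq]; right; left; rfl)
    have hz : T.Adj v z := hts (by rw [hteq]; right; right; rfl)
    rcases tree_adj_dist hT r hx with hdx | hdx
    · rcases tree_adj_dist hT r hy with hdy | hdy
      · exact ⟨x, y, hxy, hx, hy, hdx, hdy⟩
      · rcases tree_adj_dist hT r hz with hdz | hdz
        · exact ⟨x, z, hxz, hx, hz, hdx, hdz⟩
        · exact absurd (tree_parent_unique hT r hy hz (by omega) (by omega)) hyz
    · rcases tree_adj_dist hT r hy with hdy | hdy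
      · rcases tree_adj_dist hT r hz with hdz | hdz
        · exact ⟨y, z, hyz, hy, hz, hdy, hdz⟩
        · exact absurd (tree_parent_unique hT r hx hz (by omega) (by omega)) hxz
      · exact absurd (tree_parent_unique hT r hx hy (by omega) (by omega)) hxy
  obtain ⟨c, c', hcc', hvc, hvc', hdc, hdc'⟩ := hchildren
  have hdeg_c : ∀ w, T.dist r c ≤ T.dist r w → (T.neighborSet w).ncard ≤ 2 := by
    intro w hw; exact hdeep w (by omega)
  have hdeg_c' : ∀ w, T.dist r c' ≤ T.dist r w → (T.neighborSet w).ncard ≤ 2 := by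
    intro w hw; exact hdeep w (by omega)
  have hcr : c ≠ r := by
    intro h; rw [h, SimpleGraph.dist_self] at hdc; omega
  have hc'r : c' ≠ r := by
    intro h; rw [h, SimpleGraph.dist_self] at hdc'; omega
  obtain ⟨p₁, a₁, ha0, had, haadj, hai, hal⟩ := desc hT r n c (by omega) hcr hdeg_c
  obtain ⟨q₁, b₁, hb0, hbd, hbadj, hbi, hbl⟩ := desc hT r n c' (by omega) hc'r hdeg_c'
  set P := p₁ + 1 with hP
  set Q := q₁ + 1 with hQ
  set A : ℕ → Fin n := fun i => if i = 0 then v else a₁ (i-1) with hA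
  set B : ℕ → Fin n := fun i => if i = 0 then v else b₁ (i-1) with hB
  have hdA : ∀ i ≤ P, T.dist r (A i) = T.dist r v + i := by
    intro i hi
    rcases Nat.eq_zero_or_pos i with h0 | h0
    · simp [hA, h0]
    · have e1 : ¬ (i = 0) := by omega
      simp only [hA, e1, if_false]
      rw [had (i-1) (by omega), hdc]; omega
  have hdB : ∀ i ≤ Q, T.dist r (B i) = T.dist r v + i := by
    intro i hi
    rcases Nat.eq_zero_or_pos i with h0 | h0
    · simp [hB, h0]
    · have e1 : ¬ (i = 0) := by omega
      simp only [hB, e1, if_false]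
      rw [hbd (i-1) (by omega), hdc']; omega
  have hadjA : ∀ i < P, T.Adj (A i) (A (i+1)) := by
    intro i hi
    rcases Nat.eq_zero_or_pos i with h0 | h0
    · subst h0; simpa [hA, ha0] using hvc
    · have e1 : ¬ (i = 0) := by omega
      simp only [hA, e1, if_false]
      have := haadj (i-1) (by omega)
      rwa [show i - 1 + 1 = i + 1 - 1 by omega] at this
  have hadjB : ∀ i < Q, T.Adj (B i) (B (i+1)) := by
    intro i hi
    rcases Nat.eq_zero_or_pos i with h0 | h0
    · subst h0; simpa [hB, hb0] using hvc'
    · have e1 : ¬ (i = 0) := by omega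
      simp only [hB, e1, if_false]
      have := hbadj (i-1) (by omega)
      rwa [show i - 1 + 1 = i + 1 - 1 by omega] at this
  have hmidA : ∀ i, 1 ≤ i → i < P → (T.neighborSet (A i)).ncard = 2 := by
    intro i h1 h2
    have e1 : ¬ (i = 0) := by omega
    simp only [hA, e1, if_false]
    exact hai (i-1) (by omega)
  have hmidB : ∀ i, 1 ≤ i → i < Q → (T.neighborSet (B i)).ncard = 2 := by
    intro i h1 h2
    have e1 : ¬ (i = 0) := by omega
    simp only [hB, e1, if_false]
    exact hbi (i-1) (by omega)
  have hlastA : (T.neighborSet (A P)).ncard = 1 := by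
    simp only [hA, hP, Nat.succ_ne_zero, if_false]
    simpa using hal
  have hlastB : (T.neighborSet (B Q)).ncard = 1 := by
    simp only [hB, hQ, Nat.succ_ne_zero, if_false]
    simpa using hbl
  have hA1 : A 1 = c := by simp [hA, ha0]
  have hB1 : B 1 = c' := by simp [hB, hb0]
  have hA0 : A 0 = v := by simp [hA]
  have hB0 : B 0 = v := by simp [hB]
  -- disjointness
  have hdisj : ∀ i ≤ P, ∀ j ≤ Q, A i = B j → i = 0 ∧ j = 0 := by
    have key : ∀ i, 1 ≤ i → i ≤ P → i ≤ Q → A i ≠ B i := by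
      intro i
      induction i using Nat.strong_induction_on with
      | _ i ih =>
        intro h1 hiP hiQ heq
        rcases Nat.eq_or_lt_of_le h1 with h1' | h1'
        · rw [← h1', hA1, hB1] at heq
          exact hcc' heq
        · -- i ≥ 2 : parents agree
          have hpa : T.Adj (A i) (A (i-1)) := by
            have h := hadjA (i-1) (by omega)
            rw [show i - 1 + 1 = i by omega] at h
            exact h.symm
          have hpb : T.Adj (B i) (B (i-1)) := by
            have h := hadjB (i-1) (by omega)
            rw [show i - 1 + 1 = i by omega] at h
            exact h.symm
          rw [heq] at hpa
          have hda' : T.dist r (A (i-1)) + 1 = T.dist r (B i) := by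
            rw [hdA (i-1) (by omega), hdB i (by omega)]; omega
          have hdb' : T.dist r (B (i-1)) + 1 = T.dist r (B i) := by
            rw [hdB (i-1) (by omega), hdB i (by omega)]; omega
          have := tree_parent_unique hT r hpa hpb hda' hdb'
          exact ih (i-1) (by omega) (by omega) (by omega) (by omega) this
    intro i hi j hj heq
    have hij : i = j := by
      have h1 := hdA i hi
      rw [heq, hdB j hj] at h1
      omega
    subst hij
    rcases Nat.eq_zero_or_pos i with h0 | h0
    · exact ⟨h0, h0⟩
    · exact absurd heq (key i h0 hi hj)
  -- key vertices and edges
  have hvne : ∀ i, 1 ≤ i → i ≤ P → A i ≠ v := by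
    intro i h1 h2 heq
    have := hdA i h2
    rw [heq] at this
    omega
  have hvneB : ∀ i, 1 ≤ i → i ≤ Q → B i ≠ v := by
    intro i h1 h2 heq
    have := hdB i h2
    rw [heq] at this
    omega
  have hApB1 : A P ≠ B 1 := by
    intro h
    have := hdisj P le_rfl 1 (by omega) h
    omega
  have hfnotE : ¬ T.Adj (A P) (B 1) := by
    intro hadj
    have hm : A (P-1) ∈ T.neighborSet (A P) := by
      have h := hadjA (P-1) (by omega)
      rw [show P - 1 + 1 = P by omega] at h
      exact h.symm
    have := ncard_one_mem hlastA (hadj : B 1 ∈ T.neighborSet (A P)) hm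
    have := hdisj (P-1) (by omega) 1 (by omega) this.symm
    omega
  set e : Sym2 (Fin n) := s(v, B 1) with he
  set f : Sym2 (Fin n) := s(A P, B 1) with hf
  set G' : SimpleGraph (Fin n) :=
    SimpleGraph.fromEdgeSet ((T.edgeSet \ {e}) ∪ {f}) with hG'
  have hG'adj : ∀ x y : Fin n, G'.Adj x y ↔
      ((T.Adj x y ∧ s(x,y) ≠ e) ∨ (s(x,y) = f ∧ x ≠ y)) := by
    intro x y
    rw [hG', SimpleGraph.fromEdgeSet_adj]
    constructor
    · rintro ⟨hm, hne⟩
      rcases hm with ⟨hE, hne'⟩ | hfm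
      · exact Or.inl ⟨hE, hne'⟩
      · exact Or.inr ⟨hfm, hne⟩
    · rintro (⟨hE, hne⟩ | ⟨hfm, hne⟩)
      · exact ⟨Or.inl ⟨hE, hne⟩, hE.ne⟩
      · exact ⟨Or.inr hfm, hne⟩
  -- the Graft relation holds
  have hgraft : Graft T G' := by
    refine ⟨P, Q, by omega, by omega,
      fun i => A i.val, fun j => B j.val, ?_, ?_, ?_, ?_, ?_, ?_, ?_, ?_, ?_, ?_, ?_⟩
    · intro i j hij
      replace hij : A i.val = A j.val := hij
      have hi := hdA i.val (by omega)
      rw [hij, hdA j.val (by omega)] at hi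
      exact Fin.ext (by omega)
    · intro i j hij
      replace hij : B i.val = B j.val := hij
      have hi := hdB i.val (by omega)
      rw [hij, hdB j.val (by omega)] at hi
      exact Fin.ext (by omega)
    · show A (0 : Fin (P+1)).val = B (0 : Fin (Q+1)).val
      rw [Fin.val_zero, Fin.val_zero, hA0, hB0]
    · intro i j hij
      replace hij : A i.val = B j.val := hij
      exact hdisj i.val (by omega) j.val (by omega) hij
    · intro i
      have := hadjA i.val i.isLt
      simpa using this
    · intro i
      have := hadjB i.val i.isLt
      simpa using this
    · intro i h1 h2
      exact hmidA i.val h1 h2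
    · intro i h1 h2
      exact hmidB i.val h1 h2
    · simpa using hlastA
    · simpa using hlastB
    · simp only [Fin.val_zero, Fin.val_last, hA0]; rfl
  -- edges along the A-chain survive in G'
  have hchainA : ∀ i < P, G'.Adj (A i) (A (i+1)) := by
    intro i hi
    rw [hG'adj]
    left
    refine ⟨hadjA i hi, ?_⟩
    rw [he]
    intro hcon
    rcases Sym2.eq_iff.1 hcon with ⟨h1, h2⟩ | ⟨h1, h2⟩
    · have := hdisj (i+1) (by omega) 1 (by omega) h2
      omega
    · have := hdisj i (by omega) 1 (by omega) h1
      omega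
  have hG'f : G'.Adj (A P) (B 1) := by
    rw [hG'adj]
    right
    exact ⟨rfl, hApB1⟩
  have hreachA : ∀ k ≤ P, G'.Reachable (A 0) (A k) := by
    intro k
    induction k with
    | zero => intro _; exact SimpleGraph.Reachable.refl _
    | succ k ih =>
      intro hk
      exact (ih (by omega)).trans (hchainA k (by omega)).reachable
  have hreach_vb : G'.Reachable v (B 1) := by
    have h1 := hreachA P le_rfl
    rw [hA0] at h1
    exact h1.trans hG'f.reachable
  have hadjreach : ∀ x y : Fin n, T.Adj x y → G'.Reachable x y := by
    intro x y hxy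
    by_cases hxe : s(x,y) = e
    · rw [he] at hxe
      rcases Sym2.eq_iff.1 hxe with ⟨h1, h2⟩ | ⟨h1, h2⟩
      · rw [h1, h2]; exact hreach_vb
      · rw [h1, h2]; exact hreach_vb.symm
    · exact (SimpleGraph.Adj.reachable (by rw [hG'adj]; exact Or.inl ⟨hxy, hxe⟩))
  have hG'conn : G'.Connected := by
    have hpre : G'.Preconnected := by
      intro x y
      obtain ⟨w⟩ := hc.preconnected x y
      induction w with
      | nil => exact SimpleGraph.Reachable.refl _
      | cons h p ih => exact (hadjreach _ _ h).trans ih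
    haveI := hc.nonempty
    exact ⟨hpre⟩
  -- acyclicity
  have hG'acyc : G'.IsAcyclic := by
    intro u cyc hcyc
    by_cases hfe : f ∈ cyc.edges
    · -- f is in a cycle, so its endpoints are connected avoiding f; contradiction
      have hreach : (G' \ SimpleGraph.fromEdgeSet {f}).Reachable (A P) (B 1) := by
        have := (SimpleGraph.adj_and_reachable_delete_edges_iff_exists_cycle
          (G := G') (v := A P) (w := B 1)).2 ⟨u, cyc, hcyc, by rw [← hf]; exact hfe⟩
        exact this.2
      -- transfer to T minus e
      have hmono : (G' \ SimpleGraph.fromEdgeSet {f}) ≤ T.deleteEdges {e} := by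
        intro x y hxy
        rw [SimpleGraph.sdiff_adj] at hxy
        obtain ⟨hx1, hx2⟩ := hxy
        rw [hG'adj] at hx1
        rcases hx1 with ⟨hE, hne⟩ | ⟨hfm, hne⟩
        · rw [SimpleGraph.deleteEdges_adj]
          exact ⟨hE, by simpa using hne⟩
        · exfalso
          apply hx2
          rw [SimpleGraph.fromEdgeSet_adj]
          exact ⟨by simpa using hfm, hne⟩
      have hreach2 : (T.deleteEdges {e}).Reachable (B 1) (A P) :=
        (hreach.mono hmono).symm
      -- but in T minus e, the b-path is separated from everything else
      set S : Set (Fin n) := {x | ∃ i, 1 ≤ i ∧ i ≤ Q ∧ B i = x} with hS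
      have hclosed : ∀ x y, x ∈ S → (T.deleteEdges {e}).Adj x y → y ∈ S := by
        rintro x y ⟨i, h1, h2, rfl⟩ hxy
        rw [SimpleGraph.deleteEdges_adj] at hxy
        obtain ⟨hadj, hne⟩ := hxy
        have hnee : s(B i, y) ≠ e := by simpa using hne
        rcases Nat.lt_or_ge i Q with hiQ | hiQ
        · have h2' : (T.neighborSet (B i)).ncard = 2 := hmidB i h1 hiQ
          have hm1 : B (i-1) ∈ T.neighborSet (B i) := by
            have h := hadjB (i-1) (by omega)
            rw [show i - 1 + 1 = i by omega] at h
            exact h.symm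
          have hp1 : B (i+1) ∈ T.neighborSet (B i) := hadjB i hiQ
          have hne' : B (i-1) ≠ B (i+1) := by
            intro h
            have h1' := hdB (i-1) (by omega)
            rw [h, hdB (i+1) (by omega)] at h1'
            omega
          rcases ncard_two_mem h2' hm1 hp1 hne' (hadj : y ∈ T.neighborSet (B i)) with h | h
          · rcases Nat.eq_or_lt_of_le h1 with h1' | h1'
            · exfalso
              apply hnee
              have hi1 : i = 1 := by omega
              rw [h, hi1]
              simp only [Nat.sub_self, hB0]
              rw [he]
              exact Sym2.eq_swap
            · exact ⟨i-1, by omega, by omega, h.symm⟩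
          · exact ⟨i+1, by omega, by omega, h.symm⟩
        · have hiq : i = Q := by omega
          subst hiq
          have hm1 : B (Q-1) ∈ T.neighborSet (B Q) := by
            have h := hadjB (Q-1) (by omega)
            rw [show Q - 1 + 1 = Q by omega] at h
            exact h.symm
          have := ncard_one_mem hlastB (hadj : y ∈ T.neighborSet (B Q)) hm1
          rcases Nat.lt_or_ge 1 Q with hQ1 | hQ1
          · exact ⟨Q-1, by omega, by omega, this.symm⟩
          · exfalso
            apply hnee
            have hq1 : Q = 1 := by omega
            rw [this, hq1]
            simp only [Nat.sub_self, hB0]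
            rw [he]
            exact Sym2.eq_swap
      obtain ⟨wlk⟩ := hreach2
      have : A P ∈ S := mem_of_closed hclosed wlk ⟨1, le_rfl, by omega, rfl⟩
      obtain ⟨i, h1, h2, hBi⟩ := this
      have := hdisj P le_rfl i (by omega) hBi.symm
      omega
    · -- cycle avoiding f lives in T
      have hsub : ∀ e' ∈ cyc.edges, e' ∈ T.edgeSet := by
        intro e' he'
        have hmem := cyc.edges_subset_edgeSet he'
        rw [hG', SimpleGraph.edgeSet_fromEdgeSet] at hmem
        obtain ⟨hmem1, hmem2⟩ := hmem
        rcases hmem1 with ⟨hE, -⟩ | hfm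
        · exact hE
        · exfalso
          rw [Set.mem_singleton_iff] at hfm
          rw [hfm] at he'
          exact hfe he'
      exact hT.IsAcyclic (cyc.transfer T hsub) (hcyc.transfer hsub)
  have hTree' : G'.IsTree := ⟨hG'conn, hG'acyc⟩
  -- neighborhood computations
  have hNother : ∀ x, x ≠ v → x ≠ A P → x ≠ B 1 → G'.neighborSet x = T.neighborSet x := by
    intro x hxv hxap hxb1
    ext y
    simp only [SimpleGraph.mem_neighborSet]
    rw [hG'adj]
    constructor
    · rintro (⟨h1, h2⟩ | ⟨h1, h2⟩)
      · exact h1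
      · exfalso
        rw [hf] at h1
        rcases Sym2.eq_iff.1 h1 with ⟨e1, e2⟩ | ⟨e1, e2⟩
        · exact hxap e1
        · exact hxb1 e1
    · intro h
      left
      refine ⟨h, ?_⟩
      rw [he]
      intro hcon
      rcases Sym2.eq_iff.1 hcon with ⟨e1, e2⟩ | ⟨e1, e2⟩
      · exact hxv e1
      · exact hxb1 e1
  have hApv : A P ≠ v := hvne P (by omega) le_rfl
  have hB1v : B 1 ≠ v := hvneB 1 (by omega) (by omega)
  have hNv : G'.neighborSet v = T.neighborSet v \ {B 1} := by
    ext y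
    simp only [SimpleGraph.mem_neighborSet, Set.mem_diff, Set.mem_singleton_iff]
    rw [hG'adj]
    constructor
    · rintro (⟨h1, h2⟩ | ⟨h1, h2⟩)
      · refine ⟨h1, ?_⟩
        intro hy
        apply h2
        rw [he, hy]
      · exfalso
        rw [hf] at h1
        rcases Sym2.eq_iff.1 h1 with ⟨e1, e2⟩ | ⟨e1, e2⟩
        · exact hApv e1.symm
        · exact hB1v e1.symm
    · rintro ⟨h1, h2⟩
      left
      refine ⟨h1, ?_⟩
      rw [he]
      intro hcon
      rcases Sym2.eq_iff.1 hcon with ⟨e1, e2⟩ | ⟨e1, e2⟩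
      · exact h2 e2
      · exact hB1v e1.symm
  have hB1memv : B 1 ∈ T.neighborSet v := by
    have : T.Adj v (B 1) := by rw [hB1]; exact hvc'
    exact this
  have hNvcard : 2 ≤ (G'.neighborSet v).ncard := by
    rw [hNv, Set.ncard_diff_singleton_of_mem hB1memv]
    omega
  have hNap : G'.neighborSet (A P) = insert (B 1) (T.neighborSet (A P)) := by
    ext y
    simp only [SimpleGraph.mem_neighborSet, Set.mem_insert_iff]
    rw [hG'adj]
    constructor
    · rintro (⟨h1, h2⟩ | ⟨h1, h2⟩)
      · exact Or.inr h1
      · left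
        rw [hf] at h1
        rcases Sym2.eq_iff.1 h1 with ⟨e1, e2⟩ | ⟨e1, e2⟩
        · exact e2
        · exact absurd e1 hApB1
    · rintro (h1 | h1)
      · right
        rw [hf, h1]
        exact ⟨rfl, by rw [← h1] at hApB1 ⊢; exact hApB1⟩
      · left
        refine ⟨h1, ?_⟩
        rw [he]
        intro hcon
        rcases Sym2.eq_iff.1 hcon with ⟨e1, e2⟩ | ⟨e1, e2⟩
        · exact hApv e1
        · exact hApB1 e1
  have hNapcard : (G'.neighborSet (A P)).ncard = 2 := by
    obtain ⟨z, hz⟩ := Set.ncard_eq_one.1 hlastA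
    have hzAP : z = A (P-1) := by
      have hmem : A (P-1) ∈ T.neighborSet (A P) := by
        have h := hadjA (P-1) (by omega)
        rw [show P - 1 + 1 = P by omega] at h
        exact h.symm
      rw [hz, Set.mem_singleton_iff] at hmem
      exact hmem.symm
    have hB1z : B 1 ∉ T.neighborSet (A P) := by
      rw [hz, Set.mem_singleton_iff, hzAP]
      intro hcon
      have := hdisj (P-1) (by omega) 1 (by omega) hcon.symm
      omega
    rw [hNap, Set.ncard_insert_of_notMem hB1z (Set.toFinite _), hz, Set.ncard_singleton]
  have hNb1 : G'.neighborSet (B 1) = insert (A P) (T.neighborSet (B 1) \ {v}) := by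
    ext y
    simp only [SimpleGraph.mem_neighborSet, Set.mem_insert_iff, Set.mem_diff,
      Set.mem_singleton_iff]
    rw [hG'adj]
    constructor
    · rintro (⟨h1, h2⟩ | ⟨h1, h2⟩)
      · right
        refine ⟨h1, ?_⟩
        intro hy
        apply h2
        rw [he, hy, Sym2.eq_swap]
      · left
        rw [hf] at h1
        rcases Sym2.eq_iff.1 h1 with ⟨e1, e2⟩ | ⟨e1, e2⟩
        · exact absurd e1.symm hApB1
        · exact e2
    · rintro (h1 | ⟨h1, h2⟩)
      · right
        rw [hf, h1]
        exact ⟨Sym2.eq_swap, fun hcon => hApB1 hcon.symm⟩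
      · left
        refine ⟨h1, ?_⟩
        rw [he]
        intro hcon
        rcases Sym2.eq_iff.1 hcon with ⟨e1, e2⟩ | ⟨e1, e2⟩
        · exact hB1v e1
        · exact h2 e2
  have hvmemb1 : v ∈ T.neighborSet (B 1) := by
    have : T.Adj (B 1) v := by
      have h := hadjB 0 (by omega)
      rw [hB0] at h
      exact h.symm
    exact this
  have hApnotb1 : A P ∉ T.neighborSet (B 1) := by
    intro hcon
    exact hfnotE ((hcon : T.Adj (B 1) (A P)).symm)
  have hNb1card : (G'.neighborSet (B 1)).ncard = (T.neighborSet (B 1)).ncard := by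
    rw [hNb1]
    exact Set.ncard_exchange hApnotb1 hvmemb1
  -- leaf counting
  have hsubL : {x | (G'.neighborSet x).ncard = 1} ⊆
      {x | (T.neighborSet x).ncard = 1} \ {A P} := by
    intro x hx
    have hx1 : (G'.neighborSet x).ncard = 1 := hx
    by_cases h1 : x = v
    · exfalso
      rw [h1] at hx1
      omega
    by_cases h2 : x = A P
    · exfalso
      rw [h2, hNapcard] at hx1
      omega
    by_cases h3 : x = B 1
    · refine ⟨?_, h2⟩
      rw [h3] at hx1
      rw [hNb1card] at hx1
      rw [h3]
      exact hx1
    · refine ⟨?_, h2⟩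
      rw [hNother x h1 h2 h3] at hx1
      exact hx1
  have hApL : A P ∈ {x | (T.neighborSet x).ncard = 1} := hlastA
  refine ⟨G', hgraft, hTree', ?_⟩
  calc {x | (G'.neighborSet x).ncard = 1}.ncard
      ≤ ({x | (T.neighborSet x).ncard = 1} \ {A P}).ncard :=
        Set.ncard_le_ncard hsubL (Set.toFinite _)
    _ < {x | (T.neighborSet x).ncard = 1}.ncard :=
        Set.ncard_diff_singleton_lt_of_mem hApL (Set.toFinite _)

lemma graft_main_aux {n : ℕ} : ∀ (k : ℕ) (T : SimpleGraph (Fin n)), T.IsTree →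
    {x | (T.neighborSet x).ncard = 1}.ncard ≤ k →
    ∃ G' : SimpleGraph (Fin n), Relation.ReflTransGen Graft T G' ∧
      Nonempty (G' ≃g SimpleGraph.pathGraph n) := by
  intro k
  induction k with
  | zero =>
    intro T hT hk
    by_cases hb : ∃ v, 3 ≤ (T.neighborSet v).ncard
    · obtain ⟨G', hg, hT', hlt⟩ := graft_step hT hb
      exact absurd hlt (by omega)
    · push_neg at hb
      exact ⟨T, Relation.ReflTransGen.refl, path_iso hT (fun v => by have := hb v; omega)⟩
  | succ k ih =>
    intro T hT hk
    by_cases hb : ∃ v, 3 ≤ (T.neighborSet v).ncard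
    · obtain ⟨G', hg, hT', hlt⟩ := graft_step hT hb
      obtain ⟨G'', hg2, hiso⟩ := ih G' hT' (by omega)
      exact ⟨G'', Relation.ReflTransGen.head hg hg2, hiso⟩
    · push_neg at hb
      exact ⟨T, Relation.ReflTransGen.refl, path_iso hT (fun v => by have := hb v; omega)⟩

end GraftAux

/-- Every tree which is not a path can be transformed into the path `P_n` by
finitely many total grafting operations. -/
theorem path_of_graftings {n : ℕ} (T : SimpleGraph (Fin n)) (hT : T.IsTree)
    (hnp : ¬ Nonempty (T ≃g SimpleGraph.pathGraph n)) :
    ∃ G' : SimpleGraph (Fin n), Relation.ReflTransGen Graft T G' ∧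
      Nonempty (G' ≃g SimpleGraph.pathGraph n) := by
  exact graft_main_aux _ T hT le_rfl
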